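/- arXiv:2012.11359 — 2 statements merged into one kernel-verified Lean document; each statement's English description precedes it below -/
import Mathlib

section
/- For every X in A, the matrix M_X is invertible (as an 8×8 real matrix) if and only if both squared seminorms are nonzero, i.e., if and only if N₁(X) ≠ 0 and N₋₁(X) ≠ 0. -/
noncomputable section

/-- Standard basis vectors of `A := Fin 8 → ℝ`: `e i j = 1` if `i = j`, else `0`. -/
def e (i : Fin 8) : Fin 8 → ℝ := fun j => if i = j then 1 else 0

/-- The octonion-like (split-biquaternion) product on `Fin 8 → ℝ`: the unique bilinear
multiplication determined by the multiplication table on the basis `e 0, …, e 7`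
(with `e 0` the two-sided identity, `e 7 · e 7 = e 0`, `e i · e i = -e 0` for `1 ≤ i ≤ 6`, etc.),
written out in coordinates. -/
def omul (X Y : Fin 8 → ℝ) : Fin 8 → ℝ :=
  ![X 0*Y 0 - X 1*Y 1 - X 2*Y 2 - X 3*Y 3 - X 4*Y 4 - X 5*Y 5 - X 6*Y 6 + X 7*Y 7,
    X 1*Y 0 + X 0*Y 1 - X 3*Y 2 + X 2*Y 3 + X 5*Y 4 - X 4*Y 5 - X 7*Y 6 - X 6*Y 7,
    X 2*Y 0 + X 3*Y 1 + X 0*Y 2 - X 1*Y 3 - X 6*Y 4 - X 7*Y 5 + X 4*Y 6 - X 5*Y 7,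
    X 3*Y 0 - X 2*Y 1 + X 1*Y 2 + X 0*Y 3 - X 7*Y 4 + X 6*Y 5 - X 5*Y 6 - X 4*Y 7,
    X 4*Y 0 - X 5*Y 1 + X 6*Y 2 - X 7*Y 3 + X 0*Y 4 + X 1*Y 5 - X 2*Y 6 - X 3*Y 7,
    X 5*Y 0 + X 4*Y 1 - X 7*Y 2 - X 6*Y 3 - X 1*Y 4 + X 0*Y 5 + X 3*Y 6 - X 2*Y 7,
    X 6*Y 0 - X 7*Y 1 - X 4*Y 2 + X 5*Y 3 + X 2*Y 4 - X 3*Y 5 + X 0*Y 6 - X 1*Y 7,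
    X 7*Y 0 + X 6*Y 1 + X 5*Y 2 + X 4*Y 3 + X 3*Y 4 + X 2*Y 5 + X 1*Y 6 + X 0*Y 7]

/-- The conjugate (reverse) of `X`: negate the six imaginary coordinates `1,…,6`. -/
def oconj (X : Fin 8 → ℝ) : Fin 8 → ℝ :=
  ![X 0, -X 1, -X 2, -X 3, -X 4, -X 5, -X 6, X 7]

/-- `a(X) = ∑ i, (X i)²`. -/
def aQ (X : Fin 8 → ℝ) : ℝ := ∑ i, (X i)^2

/-- `b(X) = 2 X₀X₇ − 2 (X₁X₆ + X₂X₅ + X₃X₄)`. -/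
def bQ (X : Fin 8 → ℝ) : ℝ := 2*(X 0)*(X 7) - 2*((X 1)*(X 6) + (X 2)*(X 5) + (X 3)*(X 4))

/-- Squared seminorm `N_λ(X) = a(X) + λ·b(X)` (used with `λ = 1` and `λ = -1`). -/
def Nsq (lam : ℝ) (X : Fin 8 → ℝ) : ℝ := aQ X + lam * bQ X

/-- Matrix of left multiplication by `X`: column `j` is the coordinate vector of `X · eⱼ`. -/
def MX (X : Fin 8 → ℝ) : Matrix (Fin 8) (Fin 8) ℝ := Matrix.of fun i j => omul X (e j) i

/-- Matrix of right multiplication by `X`: column `j` is the coordinate vector of `eⱼ · X`. -/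
def PX (X : Fin 8 → ℝ) : Matrix (Fin 8) (Fin 8) ℝ := Matrix.of fun i j => omul (e j) X i

/-- The matrix `J` with `J 0 7 = J 7 0 = 1`, `J i (7-i) = -1` for `1 ≤ i ≤ 6`, else `0`. -/
def J : Matrix (Fin 8) (Fin 8) ℝ :=
  !![0, 0, 0, 0, 0, 0, 0, 1;
     0, 0, 0, 0, 0, 0, -1, 0;
     0, 0, 0, 0, 0, -1, 0, 0;
     0, 0, 0, 0, -1, 0, 0, 0;
     0, 0, 0, -1, 0, 0, 0, 0;
     0, 0, -1, 0, 0, 0, 0, 0;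
     0, -1, 0, 0, 0, 0, 0, 0;
     1, 0, 0, 0, 0, 0, 0, 0]


@[simp] lemma cons_val_five' {α : Type*} {m : ℕ} (x : α)
    (u : Fin m.succ.succ.succ.succ.succ → α) :
    Matrix.vecCons x u 5 =
      Matrix.vecHead (Matrix.vecTail (Matrix.vecTail (Matrix.vecTail (Matrix.vecTail u)))) :=
  rfl

@[simp] lemma cons_val_six' {α : Type*} {m : ℕ} (x : α)
    (u : Fin m.succ.succ.succ.succ.succ.succ → α) :
    Matrix.vecCons x u 6 =
      Matrix.vecHead (Matrix.vecTail (Matrix.vecTail (Matrix.vecTail (Matrix.vecTail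
        (Matrix.vecTail u))))) :=
  rfl

@[simp] lemma cons_val_seven' {α : Type*} {m : ℕ} (x : α)
    (u : Fin m.succ.succ.succ.succ.succ.succ.succ → α) :
    Matrix.vecCons x u 7 =
      Matrix.vecHead (Matrix.vecTail (Matrix.vecTail (Matrix.vecTail (Matrix.vecTail
        (Matrix.vecTail (Matrix.vecTail u)))))) :=
  rfl

set_option maxHeartbeats 1600000 in
lemma mulVec_MX (X v : Fin 8 → ℝ) : (MX X).mulVec v = omul X v := by
  funext i
  fin_cases i <;>
    · simp [MX, omul, e, Matrix.mulVec, dotProduct, Fin.sum_univ_eight,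
        Matrix.vecHead, Matrix.vecTail]
      try ring

set_option maxHeartbeats 1600000 in
lemma quad (X v : Fin 8 → ℝ) :
    omul (oconj X) (omul X v) =
      ![aQ X * v 0 + bQ X * v 7, aQ X * v 1 - bQ X * v 6, aQ X * v 2 - bQ X * v 5,
        aQ X * v 3 - bQ X * v 4, aQ X * v 4 - bQ X * v 3, aQ X * v 5 - bQ X * v 2,
        aQ X * v 6 - bQ X * v 1, aQ X * v 7 + bQ X * v 0] := by
  funext i
  fin_cases i <;>
    · simp [omul, oconj, aQ, bQ, Fin.sum_univ_eight, Matrix.vecHead, Matrix.vecTail]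
      ring

lemma omul_zero' (X : Fin 8 → ℝ) : omul X 0 = 0 := by
  funext i
  fin_cases i <;> simp [omul]

lemma Nsq_one_eq (X : Fin 8 → ℝ) :
    Nsq 1 X = (X 0 + X 7)^2 + (X 1 - X 6)^2 + (X 2 - X 5)^2 + (X 3 - X 4)^2 := by
  simp only [Nsq, aQ, bQ, Fin.sum_univ_eight]; ring

lemma Nsq_neg_eq (X : Fin 8 → ℝ) :
    Nsq (-1) X = (X 0 - X 7)^2 + (X 1 + X 6)^2 + (X 2 + X 5)^2 + (X 3 + X 4)^2 := by
  simp only [Nsq, aQ, bQ, Fin.sum_univ_eight]; ring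

set_option maxHeartbeats 3200000 in
/-- `M_X` is invertible iff both squared seminorms are nonzero. -/
theorem isUnit_MX_iff (X : Fin 8 → ℝ) :
    IsUnit (MX X) ↔ (Nsq 1 X ≠ 0 ∧ Nsq (-1) X ≠ 0) := by
  rw [← Matrix.mulVec_injective_iff_isUnit]
  constructor
  · intro hinj
    constructor
    · intro h0
      rw [Nsq_one_eq] at h0
      have e1 : X 0 + X 7 = 0 := by nlinarith [sq_nonneg (X 0 + X 7), sq_nonneg (X 1 - X 6), sq_nonneg (X 2 - X 5), sq_nonneg (X 3 - X 4)]
      have e2 : X 1 - X 6 = 0 := by nlinarith [sq_nonneg (X 0 + X 7), sq_nonneg (X 1 - X 6), sq_nonneg (X 2 - X 5), sq_nonneg (X 3 - X 4)]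
      have e3 : X 2 - X 5 = 0 := by nlinarith [sq_nonneg (X 0 + X 7), sq_nonneg (X 1 - X 6), sq_nonneg (X 2 - X 5), sq_nonneg (X 3 - X 4)]
      have e4 : X 3 - X 4 = 0 := by nlinarith [sq_nonneg (X 0 + X 7), sq_nonneg (X 1 - X 6), sq_nonneg (X 2 - X 5), sq_nonneg (X 3 - X 4)]
      have hker : (MX X).mulVec ![1,0,0,0,0,0,0,1] = (MX X).mulVec 0 := by
        rw [Matrix.mulVec_zero, mulVec_MX]
        funext i
        fin_cases i <;>
          · simp [omul, Matrix.vecHead, Matrix.vecTail]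
            linarith
      have h1 : (1 : ℝ) = 0 := by
        have := congrFun (hinj hker) 0
        simpa using this
      norm_num at h1
    · intro h0
      rw [Nsq_neg_eq] at h0
      have e1 : X 0 - X 7 = 0 := by nlinarith [sq_nonneg (X 0 - X 7), sq_nonneg (X 1 + X 6), sq_nonneg (X 2 + X 5), sq_nonneg (X 3 + X 4)]
      have e2 : X 1 + X 6 = 0 := by nlinarith [sq_nonneg (X 0 - X 7), sq_nonneg (X 1 + X 6), sq_nonneg (X 2 + X 5), sq_nonneg (X 3 + X 4)]
      have e3 : X 2 + X 5 = 0 := by nlinarith [sq_nonneg (X 0 - X 7), sq_nonneg (X 1 + X 6), sq_nonneg (X 2 + X 5), sq_nonneg (X 3 + X 4)]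
      have e4 : X 3 + X 4 = 0 := by nlinarith [sq_nonneg (X 0 - X 7), sq_nonneg (X 1 + X 6), sq_nonneg (X 2 + X 5), sq_nonneg (X 3 + X 4)]
      have hker : (MX X).mulVec ![1,0,0,0,0,0,0,-1] = (MX X).mulVec 0 := by
        rw [Matrix.mulVec_zero, mulVec_MX]
        funext i
        fin_cases i <;>
          · simp [omul, Matrix.vecHead, Matrix.vecTail]
            linarith
      have h1 : (1 : ℝ) = 0 := by
        have := congrFun (hinj hker) 0
        simpa using this
      norm_num at h1
  · rintro ⟨h1, h2⟩
    have hc : aQ X ^ 2 - bQ X ^ 2 ≠ 0 := by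
      have h : Nsq 1 X * Nsq (-1) X = aQ X ^ 2 - bQ X ^ 2 := by
        simp only [Nsq]; ring
      rw [← h]
      exact mul_ne_zero h1 h2
    intro u w huw
    have hv0 : omul X (u - w) = 0 := by
      rw [← mulVec_MX, Matrix.mulVec_sub, huw, sub_self]
    have hq := quad X (u - w)
    rw [hv0, omul_zero'] at hq
    set v : Fin 8 → ℝ := u - w with hv
    have g0 : aQ X * v 0 + bQ X * v 7 = 0 := by simpa using (congrFun hq 0).symm
    have g1 : aQ X * v 1 - bQ X * v 6 = 0 := by simpa using (congrFun hq 1).symm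
    have g2 : aQ X * v 2 - bQ X * v 5 = 0 := by simpa using (congrFun hq 2).symm
    have g3 : aQ X * v 3 - bQ X * v 4 = 0 := by simpa using (congrFun hq 3).symm
    have g4 : aQ X * v 4 - bQ X * v 3 = 0 := by simpa using (congrFun hq 4).symm
    have g5 : aQ X * v 5 - bQ X * v 2 = 0 := by simpa using (congrFun hq 5).symm
    have g6 : aQ X * v 6 - bQ X * v 1 = 0 := by simpa using (congrFun hq 6).symm
    have g7 : aQ X * v 7 + bQ X * v 0 = 0 := by simpa using (congrFun hq 7).symm
    have k0 : v 0 = 0 := by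
      have h : (aQ X ^ 2 - bQ X ^ 2) * v 0 = 0 := by linear_combination aQ X * g0 - bQ X * g7
      exact (mul_eq_zero.1 h).resolve_left hc
    have k7 : v 7 = 0 := by
      have h : (aQ X ^ 2 - bQ X ^ 2) * v 7 = 0 := by linear_combination aQ X * g7 - bQ X * g0
      exact (mul_eq_zero.1 h).resolve_left hc
    have k1 : v 1 = 0 := by
      have h : (aQ X ^ 2 - bQ X ^ 2) * v 1 = 0 := by linear_combination aQ X * g1 + bQ X * g6
      exact (mul_eq_zero.1 h).resolve_left hc
    have k6 : v 6 = 0 := by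
      have h : (aQ X ^ 2 - bQ X ^ 2) * v 6 = 0 := by linear_combination aQ X * g6 + bQ X * g1
      exact (mul_eq_zero.1 h).resolve_left hc
    have k2 : v 2 = 0 := by
      have h : (aQ X ^ 2 - bQ X ^ 2) * v 2 = 0 := by linear_combination aQ X * g2 + bQ X * g5
      exact (mul_eq_zero.1 h).resolve_left hc
    have k5 : v 5 = 0 := by
      have h : (aQ X ^ 2 - bQ X ^ 2) * v 5 = 0 := by linear_combination aQ X * g5 + bQ X * g2
      exact (mul_eq_zero.1 h).resolve_left hc
    have k3 : v 3 = 0 := by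
      have h : (aQ X ^ 2 - bQ X ^ 2) * v 3 = 0 := by linear_combination aQ X * g3 + bQ X * g4
      exact (mul_eq_zero.1 h).resolve_left hc
    have k4 : v 4 = 0 := by
      have h : (aQ X ^ 2 - bQ X ^ 2) * v 4 = 0 := by linear_combination aQ X * g4 + bQ X * g3
      exact (mul_eq_zero.1 h).resolve_left hc
    have hvz : v = 0 := by
      funext i
      simp only [Pi.zero_apply]
      fin_cases i
      · exact k0
      · exact k1
      · exact k2
      · exact k3
      · exact k4
      · exact k5
      · exact k6
      · exact k7
    have : u - w = 0 := hv ▸ hvz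
    exact sub_eq_zero.1 this
end
end

section
/- Inverses reverse products in the octonion-like algebra: for all X, Y, W, V in A, if X·W = e₀, W·X = e₀, Y·V = e₀ and V·Y = e₀, then (X·Y)·(V·W) = e₀ and (V·W)·(X·Y) = e₀. -/
noncomputable section

lemma omul_apply0 (X Y : Fin 8 → ℝ) : omul X Y 0 = X 0*Y 0 - X 1*Y 1 - X 2*Y 2 - X 3*Y 3 - X 4*Y 4 - X 5*Y 5 - X 6*Y 6 + X 7*Y 7 := rfl

lemma omul_apply1 (X Y : Fin 8 → ℝ) : omul X Y 1 = X 1*Y 0 + X 0*Y 1 - X 3*Y 2 + X 2*Y 3 + X 5*Y 4 - X 4*Y 5 - X 7*Y 6 - X 6*Y 7 := rfl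

lemma omul_apply2 (X Y : Fin 8 → ℝ) : omul X Y 2 = X 2*Y 0 + X 3*Y 1 + X 0*Y 2 - X 1*Y 3 - X 6*Y 4 - X 7*Y 5 + X 4*Y 6 - X 5*Y 7 := rfl

lemma omul_apply3 (X Y : Fin 8 → ℝ) : omul X Y 3 = X 3*Y 0 - X 2*Y 1 + X 1*Y 2 + X 0*Y 3 - X 7*Y 4 + X 6*Y 5 - X 5*Y 6 - X 4*Y 7 := rfl

lemma omul_apply4 (X Y : Fin 8 → ℝ) : omul X Y 4 = X 4*Y 0 - X 5*Y 1 + X 6*Y 2 - X 7*Y 3 + X 0*Y 4 + X 1*Y 5 - X 2*Y 6 - X 3*Y 7 := rfl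

lemma omul_apply5 (X Y : Fin 8 → ℝ) : omul X Y 5 = X 5*Y 0 + X 4*Y 1 - X 7*Y 2 - X 6*Y 3 - X 1*Y 4 + X 0*Y 5 + X 3*Y 6 - X 2*Y 7 := rfl

lemma omul_apply6 (X Y : Fin 8 → ℝ) : omul X Y 6 = X 6*Y 0 - X 7*Y 1 - X 4*Y 2 + X 5*Y 3 + X 2*Y 4 - X 3*Y 5 + X 0*Y 6 - X 1*Y 7 := rfl

lemma omul_apply7 (X Y : Fin 8 → ℝ) : omul X Y 7 = X 7*Y 0 + X 6*Y 1 + X 5*Y 2 + X 4*Y 3 + X 3*Y 4 + X 2*Y 5 + X 1*Y 6 + X 0*Y 7 := rfl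

lemma oassoc0 (X Y Z : Fin 8 → ℝ) : omul (omul X Y) Z 0 = omul X (omul Y Z) 0 := by
  simp only [omul_apply0, omul_apply1, omul_apply2, omul_apply3, omul_apply4,
    omul_apply5, omul_apply6, omul_apply7]
  ring

lemma oassoc1 (X Y Z : Fin 8 → ℝ) : omul (omul X Y) Z 1 = omul X (omul Y Z) 1 := by
  simp only [omul_apply0, omul_apply1, omul_apply2, omul_apply3, omul_apply4,
    omul_apply5, omul_apply6, omul_apply7]
  ring

lemma oassoc2 (X Y Z : Fin 8 → ℝ) : omul (omul X Y) Z 2 = omul X (omul Y Z) 2 := by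
  simp only [omul_apply0, omul_apply1, omul_apply2, omul_apply3, omul_apply4,
    omul_apply5, omul_apply6, omul_apply7]
  ring

lemma oassoc3 (X Y Z : Fin 8 → ℝ) : omul (omul X Y) Z 3 = omul X (omul Y Z) 3 := by
  simp only [omul_apply0, omul_apply1, omul_apply2, omul_apply3, omul_apply4,
    omul_apply5, omul_apply6, omul_apply7]
  ring

lemma oassoc4 (X Y Z : Fin 8 → ℝ) : omul (omul X Y) Z 4 = omul X (omul Y Z) 4 := by
  simp only [omul_apply0, omul_apply1, omul_apply2, omul_apply3, omul_apply4,
    omul_apply5, omul_apply6, omul_apply7]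
  ring

lemma oassoc5 (X Y Z : Fin 8 → ℝ) : omul (omul X Y) Z 5 = omul X (omul Y Z) 5 := by
  simp only [omul_apply0, omul_apply1, omul_apply2, omul_apply3, omul_apply4,
    omul_apply5, omul_apply6, omul_apply7]
  ring

lemma oassoc6 (X Y Z : Fin 8 → ℝ) : omul (omul X Y) Z 6 = omul X (omul Y Z) 6 := by
  simp only [omul_apply0, omul_apply1, omul_apply2, omul_apply3, omul_apply4,
    omul_apply5, omul_apply6, omul_apply7]
  ring

lemma oassoc7 (X Y Z : Fin 8 → ℝ) : omul (omul X Y) Z 7 = omul X (omul Y Z) 7 := by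
  simp only [omul_apply0, omul_apply1, omul_apply2, omul_apply3, omul_apply4,
    omul_apply5, omul_apply6, omul_apply7]
  ring

lemma one_omul0 (X : Fin 8 → ℝ) : omul (e 0) X 0 = X 0 := by
  simp only [omul_apply0, omul_apply1, omul_apply2, omul_apply3, omul_apply4,
    omul_apply5, omul_apply6, omul_apply7]
  norm_num [e, (by decide : (0:Fin 8) ≠ 1), (by decide : (0:Fin 8) ≠ 2),
    (by decide : (0:Fin 8) ≠ 3), (by decide : (0:Fin 8) ≠ 4), (by decide : (0:Fin 8) ≠ 5),
    (by decide : (0:Fin 8) ≠ 6), (by decide : (0:Fin 8) ≠ 7)]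

lemma one_omul1 (X : Fin 8 → ℝ) : omul (e 0) X 1 = X 1 := by
  simp only [omul_apply0, omul_apply1, omul_apply2, omul_apply3, omul_apply4,
    omul_apply5, omul_apply6, omul_apply7]
  norm_num [e, (by decide : (0:Fin 8) ≠ 1), (by decide : (0:Fin 8) ≠ 2),
    (by decide : (0:Fin 8) ≠ 3), (by decide : (0:Fin 8) ≠ 4), (by decide : (0:Fin 8) ≠ 5),
    (by decide : (0:Fin 8) ≠ 6), (by decide : (0:Fin 8) ≠ 7)]

lemma one_omul2 (X : Fin 8 → ℝ) : omul (e 0) X 2 = X 2 := by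
  simp only [omul_apply0, omul_apply1, omul_apply2, omul_apply3, omul_apply4,
    omul_apply5, omul_apply6, omul_apply7]
  norm_num [e, (by decide : (0:Fin 8) ≠ 1), (by decide : (0:Fin 8) ≠ 2),
    (by decide : (0:Fin 8) ≠ 3), (by decide : (0:Fin 8) ≠ 4), (by decide : (0:Fin 8) ≠ 5),
    (by decide : (0:Fin 8) ≠ 6), (by decide : (0:Fin 8) ≠ 7)]

lemma one_omul3 (X : Fin 8 → ℝ) : omul (e 0) X 3 = X 3 := by
  simp only [omul_apply0, omul_apply1, omul_apply2, omul_apply3, omul_apply4,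
    omul_apply5, omul_apply6, omul_apply7]
  norm_num [e, (by decide : (0:Fin 8) ≠ 1), (by decide : (0:Fin 8) ≠ 2),
    (by decide : (0:Fin 8) ≠ 3), (by decide : (0:Fin 8) ≠ 4), (by decide : (0:Fin 8) ≠ 5),
    (by decide : (0:Fin 8) ≠ 6), (by decide : (0:Fin 8) ≠ 7)]

lemma one_omul4 (X : Fin 8 → ℝ) : omul (e 0) X 4 = X 4 := by
  simp only [omul_apply0, omul_apply1, omul_apply2, omul_apply3, omul_apply4,
    omul_apply5, omul_apply6, omul_apply7]
  norm_num [e, (by decide : (0:Fin 8) ≠ 1), (by decide : (0:Fin 8) ≠ 2),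
    (by decide : (0:Fin 8) ≠ 3), (by decide : (0:Fin 8) ≠ 4), (by decide : (0:Fin 8) ≠ 5),
    (by decide : (0:Fin 8) ≠ 6), (by decide : (0:Fin 8) ≠ 7)]

lemma one_omul5 (X : Fin 8 → ℝ) : omul (e 0) X 5 = X 5 := by
  simp only [omul_apply0, omul_apply1, omul_apply2, omul_apply3, omul_apply4,
    omul_apply5, omul_apply6, omul_apply7]
  norm_num [e, (by decide : (0:Fin 8) ≠ 1), (by decide : (0:Fin 8) ≠ 2),
    (by decide : (0:Fin 8) ≠ 3), (by decide : (0:Fin 8) ≠ 4), (by decide : (0:Fin 8) ≠ 5),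
    (by decide : (0:Fin 8) ≠ 6), (by decide : (0:Fin 8) ≠ 7)]

lemma one_omul6 (X : Fin 8 → ℝ) : omul (e 0) X 6 = X 6 := by
  simp only [omul_apply0, omul_apply1, omul_apply2, omul_apply3, omul_apply4,
    omul_apply5, omul_apply6, omul_apply7]
  norm_num [e, (by decide : (0:Fin 8) ≠ 1), (by decide : (0:Fin 8) ≠ 2),
    (by decide : (0:Fin 8) ≠ 3), (by decide : (0:Fin 8) ≠ 4), (by decide : (0:Fin 8) ≠ 5),
    (by decide : (0:Fin 8) ≠ 6), (by decide : (0:Fin 8) ≠ 7)]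

lemma one_omul7 (X : Fin 8 → ℝ) : omul (e 0) X 7 = X 7 := by
  simp only [omul_apply0, omul_apply1, omul_apply2, omul_apply3, omul_apply4,
    omul_apply5, omul_apply6, omul_apply7]
  norm_num [e, (by decide : (0:Fin 8) ≠ 1), (by decide : (0:Fin 8) ≠ 2),
    (by decide : (0:Fin 8) ≠ 3), (by decide : (0:Fin 8) ≠ 4), (by decide : (0:Fin 8) ≠ 5),
    (by decide : (0:Fin 8) ≠ 6), (by decide : (0:Fin 8) ≠ 7)]

lemma omul_assoc (X Y Z : Fin 8 → ℝ) : omul (omul X Y) Z = omul X (omul Y Z) := by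
  funext i
  fin_cases i
  · exact oassoc0 X Y Z
  · exact oassoc1 X Y Z
  · exact oassoc2 X Y Z
  · exact oassoc3 X Y Z
  · exact oassoc4 X Y Z
  · exact oassoc5 X Y Z
  · exact oassoc6 X Y Z
  · exact oassoc7 X Y Z

lemma one_omul (X : Fin 8 → ℝ) : omul (e 0) X = X := by
  funext i
  fin_cases i
  · exact one_omul0 X
  · exact one_omul1 X
  · exact one_omul2 X
  · exact one_omul3 X
  · exact one_omul4 X
  · exact one_omul5 X
  · exact one_omul6 X
  · exact one_omul7 X

/-- Inverses reverse products: `(X·Y)⁻¹ = Y⁻¹·X⁻¹`. -/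
theorem inverse_reverses_product (X Y W V : Fin 8 → ℝ)
    (hXW : omul X W = e 0) (hWX : omul W X = e 0)
    (hYV : omul Y V = e 0) (hVY : omul V Y = e 0) :
    omul (omul X Y) (omul V W) = e 0 ∧ omul (omul V W) (omul X Y) = e 0 := by
  constructor
  · rw [omul_assoc, ← omul_assoc Y V W, hYV, one_omul, hXW]
  · rw [omul_assoc, ← omul_assoc W X Y, hWX, one_omul, hVY]
end
end
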